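/- Let G be a finite 2-edge-connected oriented graph and H1, H2 two spanning subgraphs of G, each with all connected components 2-edge-connected. If the cycle spaces of H1 and H2 (as subspaces of F(G) ⊗ Q) are equal, then H1 = H2. -/

import Mathlib

open Finset

/-- The cycle space over `ℚ` of a graph `H` (inside `F(G) ⊗ ℚ`, with `H` a spanning
subgraph of `G`): rational flows supported on the edges of `H` and satisfying
Kirchhoff's law at every vertex. -/
def cycleSpaceQ {V : Type*} [Fintype V] [DecidableEq V] (H : SimpleGraph V)
    (σ : Sym2 V → V × V) : Submodule ℚ (Sym2 V → ℚ) where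
  carrier := {a | (∀ e, a e ≠ 0 → e ∈ H.edgeSet) ∧
    ∀ v : V, ∑ e ∈ univ.filter (fun e => (σ e).1 = v), a e
           = ∑ e ∈ univ.filter (fun e => (σ e).2 = v), a e}
  zero_mem' := by simp
  add_mem' := by
    rintro a b ⟨ha1, ha2⟩ ⟨hb1, hb2⟩
    refine ⟨fun e he => ?_, fun v => ?_⟩
    · by_contra h
      exact he (by
        have h1 : a e = 0 := by_contra fun h' => h (ha1 e h')
        have h2 : b e = 0 := by_contra fun h' => h (hb1 e h')
        simp [h1, h2])
    · simp only [Pi.add_apply, Finset.sum_add_distrib, ha2 v, hb2 v]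
  smul_mem' := by
    rintro c a ⟨ha1, ha2⟩
    refine ⟨fun e he => ha1 e ?_, fun v => ?_⟩
    · intro h; apply he; simp [h]
    · simp only [Pi.smul_apply, smul_eq_mul, ← Finset.mul_sum, ha2 v]

/-! An edge `uv` of a bridgeless graph `H` lies on a cycle of `H`: a path from `v` to `u`
avoiding `uv`, closed up by `uv`. The signed indicator of that cycle is a rational flow
supported on `H` that is nonzero on `uv`, while every flow in the cycle space of `H` vanishes
off `H`. Hence the edge set of `H` is the union of the supports of its cycle space, so the
cycle space determines `H`. -/

namespace SimpleGraph

variable {V R : Type*} [DecidableEq V] [Ring R] (σ : Sym2 V → V × V)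

/-- The unit flow along the edge `s(x, y)` in the direction `x → y`, measured against the
orientation `σ`. -/
def edgeFlow (x y : V) (e : Sym2 V) : R :=
  if e = s(x, y) then (if (σ e).1 = x then 1 else -1) else 0

def walkFlow {H : SimpleGraph V} : {u v : V} → H.Walk u v → Sym2 V → R
  | _, _, .nil => 0
  | _, _, .cons (u := x) (v := y) _ p => edgeFlow σ x y + walkFlow p

lemma edgeFlow_apply_of_ne {x y : V} {e : Sym2 V} (he : e ≠ s(x, y)) :
    edgeFlow (R := R) σ x y e = 0 := by
  simp [edgeFlow, he]

lemma edgeFlow_apply_self_ne_zero [Nontrivial R] (x y : V) :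
    edgeFlow (R := R) σ x y s(x, y) ≠ 0 := by
  simp only [edgeFlow, if_true]
  split_ifs <;> simp

variable {σ}

omit [DecidableEq V] in
lemma orientation_eq_or_eq_swap (hσ : ∀ e, s((σ e).1, (σ e).2) = e) (x y : V) :
    σ s(x, y) = (x, y) ∨ σ s(x, y) = (y, x) := by
  rcases Sym2.eq_iff.mp (hσ s(x, y)) with ⟨h1, h2⟩ | ⟨h1, h2⟩
  · exact .inl (Prod.ext h1 h2)
  · exact .inr (Prod.ext h1 h2)

lemma mem_edgeSet_of_walkFlow_ne_zero {H : SimpleGraph V} {u v : V} (p : H.Walk u v)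
    {e : Sym2 V} (he : walkFlow (R := R) σ p e ≠ 0) : e ∈ H.edgeSet := by
  induction p with
  | nil => simp [walkFlow] at he
  | cons hadj p ih =>
    rename_i x y z
    by_cases hxy : e = s(x, y)
    · exact hxy ▸ hadj
    · exact ih (by simpa [walkFlow, edgeFlow_apply_of_ne σ hxy] using he)

variable [Fintype V] (σ)

def netOutflow (a : Sym2 V → R) (w : V) : R :=
  ∑ e ∈ univ.filter (fun e => (σ e).1 = w), a e - ∑ e ∈ univ.filter (fun e => (σ e).2 = w), a e

lemma netOutflow_add (a b : Sym2 V → R) (w : V) :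
    netOutflow σ (a + b) w = netOutflow σ a w + netOutflow σ b w := by
  simp only [netOutflow, Pi.add_apply, sum_add_distrib]
  abel

variable {σ}

lemma netOutflow_edgeFlow (hσ : ∀ e, s((σ e).1, (σ e).2) = e) {x y : V} (hxy : x ≠ y)
    (w : V) :
    netOutflow σ (edgeFlow (R := R) σ x y) w
      = (if x = w then 1 else 0) - (if y = w then 1 else 0) := by
  have hsum (P : Sym2 V → Prop) [DecidablePred P] :
      ∑ e ∈ univ.filter P, edgeFlow (R := R) σ x y e
        = if P s(x, y) then edgeFlow σ x y s(x, y) else 0 := by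
    rw [sum_filter, sum_eq_single s(x, y) (fun e _ he => by simp [edgeFlow_apply_of_ne σ he])
      (by simp)]
  rw [netOutflow, hsum, hsum]
  rcases orientation_eq_or_eq_swap hσ x y with h | h
  · simp [edgeFlow, h]
  · simp only [edgeFlow, h, hxy.symm, if_true, if_false]
    split_ifs <;> simp

lemma netOutflow_walkFlow (hσ : ∀ e, s((σ e).1, (σ e).2) = e) {H : SimpleGraph V}
    {u v : V} (p : H.Walk u v) (w : V) :
    netOutflow σ (walkFlow (R := R) σ p) w
      = (if u = w then 1 else 0) - (if v = w then 1 else 0) := by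
  induction p with
  | nil => simp [walkFlow, netOutflow]
  | cons hadj p ih =>
    rw [walkFlow, netOutflow_add, ih, netOutflow_edgeFlow hσ hadj.ne]
    abel

lemma mem_cycleSpaceQ_iff {H : SimpleGraph V} {a : Sym2 V → ℚ} :
    a ∈ cycleSpaceQ H σ ↔ (∀ e, a e ≠ 0 → e ∈ H.edgeSet) ∧ ∀ w, netOutflow σ a w = 0 := by
  simp only [netOutflow, sub_eq_zero]
  rfl

lemma exists_mem_cycleSpaceQ_apply_ne_zero (hσ : ∀ e, s((σ e).1, (σ e).2) = e)
    {H : SimpleGraph V} {u v : V} (huv : H.Adj u v) (hb : ¬ H.IsBridge s(u, v)) :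
    ∃ a ∈ cycleSpaceQ H σ, a s(u, v) ≠ 0 := by
  obtain ⟨p⟩ := (not_not.mp (isBridge_iff.not.mp hb)).symm
  have hp (e : Sym2 V) (he : walkFlow (R := ℚ) σ p e ≠ 0) : e ∈ H.edgeSet \ {s(u, v)} :=
    edgeSet_deleteEdges (G := H) _ ▸ mem_edgeSet_of_walkFlow_ne_zero p he
  refine ⟨edgeFlow σ u v + walkFlow σ p,
    mem_cycleSpaceQ_iff.mpr ⟨fun e he => ?_, fun w => ?_⟩, ?_⟩
  · by_cases heuv : e = s(u, v)
    · exact heuv ▸ huv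
    · exact (hp e (by simpa [edgeFlow_apply_of_ne σ heuv] using he)).1
  · rw [netOutflow_add, netOutflow_edgeFlow hσ huv.ne, netOutflow_walkFlow hσ]
    abel
  · have hp_uv : walkFlow (R := ℚ) σ p s(u, v) = 0 := by
      by_contra h
      exact (hp _ h).2 rfl
    simpa [hp_uv] using edgeFlow_apply_self_ne_zero (R := ℚ) σ u v

lemma mem_edgeSet_iff_exists_mem_cycleSpaceQ (hσ : ∀ e, s((σ e).1, (σ e).2) = e)
    {H : SimpleGraph V} (hb : ∀ e, ¬ H.IsBridge e) (e : Sym2 V) :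
    e ∈ H.edgeSet ↔ ∃ a ∈ cycleSpaceQ H σ, a e ≠ 0 := by
  induction e using Sym2.ind with
  | _ u v =>
    refine ⟨fun huv => exists_mem_cycleSpaceQ_apply_ne_zero hσ huv (hb _), ?_⟩
    rintro ⟨a, ha, hae⟩
    exact (mem_cycleSpaceQ_iff.mp ha).1 _ hae

end SimpleGraph

theorem stmt_18_general {V : Type*} [Fintype V] [DecidableEq V] (H1 H2 : SimpleGraph V)
    (σ : Sym2 V → V × V) (hσ : ∀ e, Sym2.mk (σ e).1 (σ e).2 = e)
    (hb1 : ∀ e, ¬ H1.IsBridge e) (hb2 : ∀ e, ¬ H2.IsBridge e)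
    (heq : cycleSpaceQ H1 σ = cycleSpaceQ H2 σ) :
    H1 = H2 := by
  refine SimpleGraph.edgeSet_inj.mp (Set.ext fun e => ?_)
  rw [SimpleGraph.mem_edgeSet_iff_exists_mem_cycleSpaceQ hσ hb1,
    SimpleGraph.mem_edgeSet_iff_exists_mem_cycleSpaceQ hσ hb2, heq]

/-- Let `G` be a finite 2-edge-connected oriented graph and `H1`, `H2`
two spanning subgraphs of `G`, each with all connected components 2-edge-connected
(equivalently, bridgeless). If the cycle spaces of `H1` and `H2` (as subspaces of
`F(G) ⊗ ℚ`) are equal, then `H1 = H2`. -/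
theorem stmt_18 {V : Type*} [Fintype V] [DecidableEq V] (G H1 H2 : SimpleGraph V)
    (hG : G.Connected) (hbr : ∀ e, ¬ G.IsBridge e)
    (σ : Sym2 V → V × V) (hσ : ∀ e, Sym2.mk (σ e).1 (σ e).2 = e)
    (h1 : H1 ≤ G) (h2 : H2 ≤ G)
    (hb1 : ∀ e, ¬ H1.IsBridge e) (hb2 : ∀ e, ¬ H2.IsBridge e)
    (heq : cycleSpaceQ H1 σ = cycleSpaceQ H2 σ) :
    H1 = H2 :=
  stmt_18_general H1 H2 σ hσ hb1 hb2 heq
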